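/- arXiv:2506.10033 — 3 statements merged into one kernel-verified Lean document; each statement's English description precedes it below -/
import Mathlib

section
/- For the difference operator (Δ_k f)(x) = f(x+k) − f(x) and the shifted elementary symmetric function ê_j(n)(x) = e_j(x, x+1, ..., x+n) (the j-th elementary symmetric polynomial in the n+1 arguments x, x+1, ..., x+n), one has (Δ_1 ê_{n+1-j}(n))(r) = (n+1) · e_{n-j}(r+1, r+2, ..., r+n) for all integers r and all 0 ≤ j ≤ n. -/
lemma esymm_cons {R : Type*} [CommSemiring R] (a : R) (s : Multiset R) (k : ℕ) :
    (a ::ₘ s).esymm (k + 1) = s.esymm (k + 1) + a * s.esymm k := by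
  simp [Multiset.esymm, Multiset.powersetCard_cons, Multiset.map_map, Function.comp,
    Multiset.sum_map_mul_left]

lemma coe_range_map (m : ℕ) (f : ℤ → ℤ) :
    (((Multiset.range m : Multiset ℕ) : Multiset ℤ)).map f
      = (Multiset.range m).map (fun i : ℕ => f (i : ℤ)) := by
  simp [Multiset.bind_singleton, Multiset.map_map, Function.comp]

lemma map_range_shift (n : ℕ) (r : ℤ) :
    (Multiset.range (n + 1)).map (fun i : ℕ => r + (i : ℤ))
      = r ::ₘ (Multiset.range n).map (fun i : ℕ => (r + 1) + (i : ℤ)) := by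
  induction n with
  | zero => simp
  | succ n ih =>
      rw [show Multiset.range (n + 1 + 1) = (n + 1) ::ₘ Multiset.range (n + 1) from
        Multiset.range_succ _, Multiset.map_cons, ih, Multiset.cons_swap,
        Multiset.range_succ, Multiset.map_cons]
      congr 2
      push_cast
      ring

/-- `(Δ₁ ê_{n+1-j}(n))(r) = (n+1) · e_{n-j}(r+1, ..., r+n)` for all
integers `r` and all `0 ≤ j ≤ n`, where `ê_j(n)(x) = e_j(x, x+1, ..., x+n)` and
`(Δ_k f)(x) = f(x+k) - f(x)`. -/
theorem stmt_0 (n j : ℕ) (hj : j ≤ n) (r : ℤ) :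
    (((Multiset.range (n + 1)).map (fun i => (r + 1) + (i : ℤ))).esymm (n + 1 - j))
      - (((Multiset.range (n + 1)).map (fun i => r + (i : ℤ))).esymm (n + 1 - j))
      = ((n : ℤ) + 1) *
        (((Multiset.range n).map (fun i => (r + 1) + (i : ℤ))).esymm (n - j)) := by
  rw [coe_range_map, coe_range_map, coe_range_map]
  set s : Multiset ℤ := (Multiset.range n).map (fun i : ℕ => (r + 1) + (i : ℤ)) with hs
  have h1 : ((Multiset.range (n + 1)).map (fun i : ℕ => (r + 1) + (i : ℤ)))
      = (r + 1 + (n : ℤ)) ::ₘ s := by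
    simp [hs, Multiset.range_succ]
  have h2 : ((Multiset.range (n + 1)).map (fun i : ℕ => r + (i : ℤ))) = r ::ₘ s :=
    map_range_shift n r
  have hk : n + 1 - j = (n - j) + 1 := by omega
  rw [h1, h2, hk, esymm_cons, esymm_cons]
  ring
end

section
/- Define operators ℓ_n := ℓ_0 (z ℓ_0)^n for n ≥ 0, where ℓ_0 = z d/dz + μ + 1/2 + ρ/z acts on 𝕍-valued Laurent polynomials, μ : 𝕍 → 𝕍 is an operator anti-self-adjoint with respect to η (η(μv, w) = −η(v, μw)), and ρ : 𝕍 → 𝕍 is self-adjoint (η(ρv,w) = η(v,ρw)). Then each ℓ_n is infinitesimally symplectic with respect to Ω(f,g) = Res_{z=0} η(f(−z), g(z)): Ω(ℓ_n f, g) + Ω(f, ℓ_n g) = 0. -/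
/-- The symplectic pairing `Ω(f,g) = Res_{z=0} η(f(-z), g(z)) dz` on `𝕍`-valued
Laurent polynomials, modelled as finitely supported functions `ℤ →₀ V`. -/
noncomputable def OmegaForm {V : Type*} [AddCommGroup V] [Module ℂ V]
    (η : V →ₗ[ℂ] V →ₗ[ℂ] ℂ) (f g : ℤ →₀ V) : ℂ :=
  ∑ᶠ i : ℤ, ((-1 : ℂ) ^ i) * η (f i) (g (-1 - i))

/-- The operator `ℓ_0 = z d/dz + μ + 1/2 + ρ/z` on `𝕍`-valued Laurent polynomials:
on coefficients, `(ℓ_0 f)_i = i • f_i + μ(f_i) + (1/2) f_i + ρ(f_{i+1})`. -/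
noncomputable def ellZero {V : Type*} [AddCommGroup V] [Module ℂ V]
    (μ ρ : V →ₗ[ℂ] V) (f : ℤ →₀ V) : ℤ →₀ V :=
  (f.sum fun i v => Finsupp.single i ((i : ℂ) • v + μ v + (2 : ℂ)⁻¹ • v))
    + Finsupp.mapDomain (· - 1) (Finsupp.mapRange ρ (map_zero ρ) f)

/-- `ℓ_n := ℓ_0 ∘ (M_z ∘ ℓ_0)^n`, where `M_z` is multiplication by `z`. -/
noncomputable def ellOp {V : Type*} [AddCommGroup V] [Module ℂ V]
    (μ ρ : V →ₗ[ℂ] V) (n : ℕ) : (ℤ →₀ V) → (ℤ →₀ V) :=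
  ellZero μ ρ ∘ (fun f => Finsupp.mapDomain (· + 1) (ellZero μ ρ f))^[n]

section Aux

variable {V : Type*} [AddCommGroup V] [Module ℂ V]
  (η : V →ₗ[ℂ] V →ₗ[ℂ] ℂ) (μ ρ : V →ₗ[ℂ] V)

lemma ellZero_apply (f : ℤ →₀ V) (j : ℤ) :
    (ellZero μ ρ f) j = (j : ℂ) • f j + μ (f j) + (2 : ℂ)⁻¹ • f j + ρ (f (j + 1)) := by
  classical
  unfold ellZero
  rw [Finsupp.add_apply, Finsupp.sum_apply]
  have h1 : (f.sum fun i v => (Finsupp.single i ((i : ℂ) • v + μ v + (2 : ℂ)⁻¹ • v)) j)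
      = (j : ℂ) • f j + μ (f j) + (2 : ℂ)⁻¹ • f j := by
    rw [Finsupp.sum, Finset.sum_eq_single j]
    · simp
    · intro b _ hb; simp [Finsupp.single_apply, hb]
    · intro hj
      rw [Finsupp.notMem_support_iff.mp hj]
      simp
  have hinj : Function.Injective (· - 1 : ℤ → ℤ) := sub_left_injective
  have h2 := Finsupp.mapDomain_apply hinj (Finsupp.mapRange ρ (map_zero ρ) f) (j + 1)
  simp only [add_sub_cancel_right] at h2
  rw [h1, h2, Finsupp.mapRange_apply]

lemma mapAdd1_apply (f : ℤ →₀ V) (j : ℤ) :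
    (Finsupp.mapDomain (· + 1) f) j = f (j - 1) := by
  have hinj : Function.Injective (· + 1 : ℤ → ℤ) := add_left_injective 1
  have h := Finsupp.mapDomain_apply hinj f (j - 1)
  simpa using h

lemma neg_one_zpow_succ (i : ℤ) : ((-1 : ℂ)) ^ (i + 1) = -(-1 : ℂ) ^ i := by
  rw [zpow_add₀ (by norm_num : (-1 : ℂ) ≠ 0), zpow_one]
  ring

lemma supp_fin (f : ℤ →₀ V) (φ : ℤ → V → ℂ) (h : ∀ i, φ i 0 = 0) :
    (Function.support fun i => φ i (f i)).Finite := by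
  apply Set.Finite.subset f.finite_support
  intro i hi
  simp only [Function.mem_support] at hi
  rw [Function.mem_support]
  intro h0
  exact hi (by rw [h0, h i])

lemma mapAdd1_skew (f g : ℤ →₀ V) :
    OmegaForm η (Finsupp.mapDomain (· + 1) f) g
      + OmegaForm η f (Finsupp.mapDomain (· + 1) g) = 0 := by
  unfold OmegaForm
  have hre : (∑ᶠ i : ℤ, ((-1 : ℂ) ^ i) * η ((Finsupp.mapDomain (· + 1) f) i) (g (-1 - i)))
      = ∑ᶠ i : ℤ, ((-1 : ℂ) ^ (i + 1)) * η (f i) (g (-2 - i)) := by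
    rw [← finsum_comp_equiv (Equiv.addRight (1 : ℤ))]
    apply finsum_congr
    intro i
    simp only [Equiv.coe_addRight, mapAdd1_apply, add_sub_cancel_right]
    congr 2
    ring
  rw [hre]
  have : ∀ i : ℤ, ((-1 : ℂ) ^ (i + 1)) * η (f i) (g (-2 - i))
      = -(((-1 : ℂ) ^ i) * η (f i) ((Finsupp.mapDomain (· + 1) g) (-1 - i))) := by
    intro i
    rw [mapAdd1_apply, neg_one_zpow_succ]
    have : (-1 : ℤ) - i - 1 = -2 - i := by ring
    rw [this]; ring
  rw [finsum_congr this, finsum_neg_distrib]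
  ring

lemma ellZero_skew (hμ : ∀ v w : V, η (μ v) w = - η v (μ w))
    (hρ : ∀ v w : V, η (ρ v) w = η v (ρ w)) (f g : ℤ →₀ V) :
    OmegaForm η (ellZero μ ρ f) g + OmegaForm η f (ellZero μ ρ g) = 0 := by
  classical
  unfold OmegaForm
  set c : ℤ → ℂ := fun i => ((-1 : ℂ) ^ i) * η (f i) (ρ (g (-i))) with hc
  have hA : (Function.support fun i : ℤ =>
      ((-1 : ℂ) ^ i) * η ((ellZero μ ρ f) i) (g (-1 - i))).Finite :=
    supp_fin (ellZero μ ρ f) (fun i v => ((-1 : ℂ) ^ i) * η v (g (-1 - i))) (by simp)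
  have hB : (Function.support fun i : ℤ =>
      ((-1 : ℂ) ^ i) * η (f i) ((ellZero μ ρ g) (-1 - i))).Finite :=
    supp_fin f (fun i v => ((-1 : ℂ) ^ i) * η v ((ellZero μ ρ g) (-1 - i))) (by simp)
  rw [← finsum_add_distrib hA hB]
  have hterm : ∀ i : ℤ,
      (((-1 : ℂ) ^ i) * η ((ellZero μ ρ f) i) (g (-1 - i))
        + ((-1 : ℂ) ^ i) * η (f i) ((ellZero μ ρ g) (-1 - i)))
      = c i - c (i + 1) := by
    intro i
    rw [ellZero_apply, ellZero_apply]
    have e1 : (-1 : ℤ) - i + 1 = -i := by ring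
    rw [e1]
    simp only [map_add, map_smul, LinearMap.add_apply, LinearMap.smul_apply, smul_eq_mul]
    rw [hμ (f i) (g (-1 - i)), hρ (f (i + 1)) (g (-1 - i))]
    have e2 : ((-1 : ℤ) - i : ℂ) = -1 - (i : ℂ) := by push_cast; ring
    have e3 : (-1 : ℤ) - i = -(i + 1) := by ring
    rw [hc]
    simp only [e3, neg_one_zpow_succ]
    push_cast
    ring
  rw [finsum_congr hterm]
  have hcfin : (Function.support c).Finite :=
    supp_fin f (fun i v => ((-1 : ℂ) ^ i) * η v (ρ (g (-i)))) (by simp)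
  have hcfin' : (Function.support fun i => c (i + 1)).Finite := by
    have := hcfin.preimage (f := fun i : ℤ => i + 1) (Set.injOn_of_injective (fun a b h => by omega))
    exact this
  have hsub : ∀ i : ℤ, c i - c (i + 1) = c i + (-(c (i + 1))) := by intro i; ring
  have h2fin : (Function.support fun i => -c (i + 1)).Finite := by
    simpa [Function.support_neg] using hcfin'
  rw [finsum_congr hsub, finsum_add_distrib hcfin h2fin, finsum_neg_distrib]
  have hshift : (∑ᶠ i : ℤ, c (i + 1)) = ∑ᶠ i : ℤ, c i := by
    simpa using finsum_comp_equiv (Equiv.addRight (1 : ℤ)) (f := c)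
  rw [hshift]; ring

end Aux

/-- if `μ` is anti-self-adjoint and `ρ` self-adjoint for `η`, then each
`ℓ_n` is infinitesimally symplectic: `Ω(ℓ_n f, g) + Ω(f, ℓ_n g) = 0`. -/
theorem stmt_8 (V : Type*) [AddCommGroup V] [Module ℂ V] [FiniteDimensional ℂ V]
    (η : V →ₗ[ℂ] V →ₗ[ℂ] ℂ)
    (hsymm : ∀ v w : V, η v w = η w v)
    (hnd : ∀ v : V, (∀ w : V, η v w = 0) → v = 0)
    (μ ρ : V →ₗ[ℂ] V)
    (hμ : ∀ v w : V, η (μ v) w = - η v (μ w))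
    (hρ : ∀ v w : V, η (ρ v) w = η v (ρ w))
    (n : ℕ) (f g : ℤ →₀ V) :
    OmegaForm η (ellOp μ ρ n f) g + OmegaForm η f (ellOp μ ρ n g) = 0 := by
  induction n generalizing f g with
  | zero =>
    simpa [ellOp] using ellZero_skew η μ ρ hμ hρ f g
  | succ n ih =>
    have hf : ellOp μ ρ (n + 1) f
        = ellOp μ ρ n (Finsupp.mapDomain (· + 1) (ellZero μ ρ f)) := by
      simp only [ellOp, Function.comp_apply, Function.iterate_succ_apply]
    have hg : ellOp μ ρ (n + 1) g
        = ellZero μ ρ (Finsupp.mapDomain (· + 1) (ellOp μ ρ n g)) := by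
      simp only [ellOp, Function.comp_apply, Function.iterate_succ_apply']
    rw [hf, hg]
    have h1 := ih (Finsupp.mapDomain (· + 1) (ellZero μ ρ f)) g
    -- Ω(ℓₙ(M(ℓ₀ f)), g) = -Ω(M(ℓ₀ f), ℓₙ g) = Ω(ℓ₀ f, M(ℓₙ g)) = -Ω(f, ℓ₀(M(ℓₙ g)))
    have h2 := mapAdd1_skew η (ellZero μ ρ f) (ellOp μ ρ n g)
    have h3 := ellZero_skew η μ ρ hμ hρ f (Finsupp.mapDomain (· + 1) (ellOp μ ρ n g))
    linear_combination h1 - h2 + h3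
end

section
/- In the Heisenberg/Fock quantization with cocycle C defined by C(p_α², q_α²) = 2, C(p_α p_β, q_α q_β) = 1 for α ≠ β, and C = 0 on all other pairs of quadratic Darboux monomials: for the quadratic Hamiltonians h_{l_{−1}}(f) = −∑_{r,α} q_r^α p_{r−1}^α − (1/2)∑_{α,β} η_{αβ} q_0^α q_0^β and h_{z^{2k−1}}(f) = −∑_{r,α} q_r^α p_{r+2k−1}^α + (1/2)∑_{i,α,β} (−1)^i η^{αβ} p_i^α p_{2k−2−i}^β (sum over 0 ≤ i ≤ 2k−2), the cocycle evaluates to C(h_{l_{−1}}, h_{z^{2k−1}}) = (1/2) δ_{k,1} · ∑_α η_{αα'} η^{αα'}-trace = (1/2) δ_{k,1} N, where N = dim 𝕍 = tr(η η^{-1}) (interpreted as χ(X) in the geometric setting). -/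
/-! Among the monomials `p_i p_{2k-2-i}` only `p_0 p_0` pairs nontrivially with `q_0 q_0`, and
it occurs in the range `0 ≤ i ≤ 2k-2` exactly when `k = 1`. There the two terms of the
cocycle, made equal by the symmetry of `η⁻¹`, give `-2 ∑ η_{αβ} η^{αβ}`, and
`∑ η_{αβ} η^{αβ} = tr(η η⁻¹) = N`. -/

open Finset

section Cocycle

variable {L I R : Type*} [DecidableEq L] [DecidableEq I] [Fintype I] [CommRing R]

/-- `quadCocycle a b c d` is `C(q_a q_b, p_c p_d)`. -/
def quadCocycle (a b c d : L × I) : R :=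
  (if a = c ∧ b = d then -1 else 0) + (if a = d ∧ b = c then -1 else 0)

theorem sum_sum_mul_eq_card_of_symm {A B : I → I → R} (hB : ∀ a b, B a b = B b a)
    (hAB : ∀ a c, ∑ b, A a b * B b c = if a = c then 1 else 0) :
    ∑ a, ∑ b, A a b * B a b = Fintype.card I := by
  calc ∑ a, ∑ b, A a b * B a b = ∑ a, ∑ b, A a b * B b a :=
        sum_congr rfl fun a _ => sum_congr rfl fun b _ => by rw [hB]
    _ = ∑ _a : I, (1 : R) := sum_congr rfl fun a _ => by rw [hAB, if_pos rfl]
    _ = Fintype.card I := by simp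

theorem sum_mul_quadCocycle {A B : I → I → R} (hB : ∀ a b, B a b = B b a) (m i j : L) :
    ∑ α, ∑ β, ∑ α', ∑ β', A α β * B α' β' * quadCocycle (m, α) (m, β) (i, α') (j, β')
      = if i = m ∧ j = m then -2 * ∑ α, ∑ β, A α β * B α β else 0 := by
  split_ifs with h
  · obtain ⟨rfl, rfl⟩ := h
    have hswap : ∑ α, ∑ β, A α β * B β α = ∑ α, ∑ β, A α β * B α β :=
      sum_congr rfl fun α _ => sum_congr rfl fun β _ => by rw [hB]
    simp [quadCocycle, mul_add, sum_add_distrib, ite_and, hswap]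
    ring
  · have hzero : ∀ α β α' β' : I, quadCocycle (m, α) (m, β) (i, α') (j, β') = (0 : R) := by
      intro α β α' β'
      simp only [quadCocycle, Prod.mk.injEq]
      rw [if_neg (by tauto), if_neg (by tauto), add_zero]
    simp [hzero]

end Cocycle

theorem sum_range_neg_one_pow_mul_ite_zero_zero {R : Type*} [CommRing R] (k : ℕ) (x : R) :
    ∑ i ∈ range (2 * k - 1), (-1 : R) ^ i * (if i = 0 ∧ 2 * k - 2 - i = 0 then x else 0)
      = if k = 1 then x else 0 := by
  rcases k with _ | _ | k
  · simp
  · simp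
  · refine (sum_eq_zero fun i _ => ?_).trans (if_neg (by omega)).symm
    rw [if_neg (by omega), mul_zero]

theorem stmt_17_general (I : Type*) [Fintype I] [DecidableEq I]
    (eta etaInv : I → I → ℂ)
    (hsymInv : ∀ α β, etaInv α β = etaInv β α)
    (hInv : ∀ α γ, ∑ β, eta α β * etaInv β γ = if α = γ then 1 else 0)
    (C : (ℕ × I) → (ℕ × I) → (ℕ × I) → (ℕ × I) → ℂ)
    (hC : ∀ a b c d : ℕ × I,
        C a b c d = (if a = c ∧ b = d then -1 else 0)
          + (if a = d ∧ b = c then -1 else 0))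
    (k : ℕ) :
    -(4 : ℂ)⁻¹ * ∑ i ∈ Finset.range (2 * k - 1), ∑ α, ∑ β, ∑ α', ∑ β',
        eta α β * (-1 : ℂ) ^ i * etaInv α' β' *
          C (0, α) (0, β) (i, α') (2 * k - 2 - i, β')
      = (2 : ℂ)⁻¹ * (if k = 1 then 1 else 0) * ∑ α, ∑ β, eta α β * etaInv α β
      ∧ ∑ α, ∑ β, eta α β * etaInv α β = (Fintype.card I : ℂ) := by
  obtain rfl : C = quadCocycle := by funext a b c d; exact hC a b c d
  refine ⟨?_, sum_sum_mul_eq_card_of_symm hsymInv hInv⟩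
  have hsign : ∀ i, ∑ α, ∑ β, ∑ α', ∑ β', eta α β * (-1 : ℂ) ^ i * etaInv α' β' *
      quadCocycle (0, α) (0, β) (i, α') (2 * k - 2 - i, β')
      = (-1) ^ i * ∑ α, ∑ β, ∑ α', ∑ β', eta α β * etaInv α' β' *
          quadCocycle (0, α) (0, β) (i, α') (2 * k - 2 - i, β') := by
    intro i
    simp only [mul_sum]
    ring_nf
  simp_rw [hsign, sum_mul_quadCocycle hsymInv, sum_range_neg_one_pow_mul_ite_zero_zero]
  split_ifs <;> ring

/-- cocycle evaluation: let `C` be the cocycle on quadratic Darboux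
monomials, determined on a pair (q-monomial, p-monomial) by
`C(q_{m}^α q_{n}^β, p_{m'}^{α'} p_{n'}^{β'})
  = -[ (m,α)=(m',α') ∧ (n,β)=(n',β') ] - [ (m,α)=(n',β') ∧ (n,β)=(m',α') ]`
(so that `C(p_α², q_α²) = 2`, `C(p_α p_β, q_α q_β) = 1` for `α ≠ β`, and `C = 0`
otherwise). Then for the quadratic Hamiltonians `h_{l_{-1}}` and `h_{z^{2k-1}}`,
the cocycle pairing
`-(1/4) ∑_{i=0}^{2k-2} ∑_{α,β,α',β'} η_{αβ} (-1)^i η^{α'β'}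
  C(q_0^α q_0^β, p_i^{α'} p_{2k-2-i}^{β'}) = (1/2) δ_{k,1} N`,
where `N = tr(η η⁻¹) = dim 𝕍` (interpreted as `χ(X)` geometrically). -/
theorem stmt_17 (I : Type*) [Fintype I] [DecidableEq I]
    (eta etaInv : I → I → ℂ)
    (hsym : ∀ α β, eta α β = eta β α)
    (hsymInv : ∀ α β, etaInv α β = etaInv β α)
    (hInv : ∀ α γ, ∑ β, eta α β * etaInv β γ = if α = γ then 1 else 0)
    (C : (ℕ × I) → (ℕ × I) → (ℕ × I) → (ℕ × I) → ℂ)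
    (hC : ∀ a b c d : ℕ × I,
        C a b c d = (if a = c ∧ b = d then -1 else 0)
          + (if a = d ∧ b = c then -1 else 0))
    (k : ℕ) (hk : 1 ≤ k) :
    -(4 : ℂ)⁻¹ * ∑ i ∈ Finset.range (2 * k - 1), ∑ α, ∑ β, ∑ α', ∑ β',
        eta α β * (-1 : ℂ) ^ i * etaInv α' β' *
          C (0, α) (0, β) (i, α') (2 * k - 2 - i, β')
      = (2 : ℂ)⁻¹ * (if k = 1 then 1 else 0) * ∑ α, ∑ β, eta α β * etaInv α β
      ∧ ∑ α, ∑ β, eta α β * etaInv α β = (Fintype.card I : ℂ) :=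
  stmt_17_general I eta etaInv hsymInv hInv C hC k
end
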